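/- Under Assumption A1, suppose in addition that Λ = U and T = I (the trace operator is the identity), that A^⊤ = A, that A : U → U* has a bounded inverse, and set M := A and α := 1. Then the only bounded linear operator X : U → U satisfying Assumption A2 (X² = I and range(R) = ker((I − X)T)) together with X^⊤ A X = A is X = 2 R Â^{-1} R^⊤ A − I. With this choice of X, the undamped Robin–Schwarz iteration (β = 1) satisfies u^(1) = R û for any initial λ^(0) ∈ U*, where û is the unique solution of Â û = f̂. -/

import Mathlib

/-- The transpose (dual map) `B^⊤ : Y* → X*` of a bounded linear operator `B : X → Y`. -/
noncomputable def trOp {X Y : Type*} [NormedAddCommGroup X] [NormedSpace ℂ X]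
    [NormedAddCommGroup Y] [NormedSpace ℂ Y] (B : X →L[ℂ] Y) :
    (Y →L[ℂ] ℂ) →L[ℂ] (X →L[ℂ] ℂ) :=
  (ContinuousLinearMap.compL ℂ X Y ℂ).flip B

/-- The exceptional exchange operator `X = 2 R Â⁻¹ R^⊤ A − I` (here `Λ = U`, `T = I`). -/
noncomputable def exX {Uhat U : Type*}
    [NormedAddCommGroup Uhat] [NormedSpace ℂ Uhat]
    [NormedAddCommGroup U] [NormedSpace ℂ U]
    (R : Uhat →L[ℂ] U) (A : U →L[ℂ] (U →L[ℂ] ℂ))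
    (Ahatinv : (Uhat →L[ℂ] ℂ) →L[ℂ] Uhat) : U →L[ℂ] U :=
  (2 : ℂ) • (R.comp (Ahatinv.comp ((trOp R).comp A))) - ContinuousLinearMap.id ℂ U

/-- The scattering operator for `T = I`, `M = A`, `α = 1`:
`S = −I + 2 M (A + M)⁻¹ = −I + 2 A (2A)⁻¹`, with `(A + M)⁻¹ = ½ A⁻¹`. -/
noncomputable def exS {U : Type*} [NormedAddCommGroup U] [NormedSpace ℂ U]
    (A : U →L[ℂ] (U →L[ℂ] ℂ)) (Ainv : (U →L[ℂ] ℂ) →L[ℂ] U) :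
    (U →L[ℂ] ℂ) →L[ℂ] (U →L[ℂ] ℂ) :=
  -(ContinuousLinearMap.id ℂ (U →L[ℂ] ℂ)) + (2 : ℂ) • (A.comp ((2 : ℂ)⁻¹ • Ainv))

/-- The data `d = 2 X^⊤ M (A + M)⁻¹ f` for `T = I`, `M = A`, `α = 1`. -/
noncomputable def exd {Uhat U : Type*}
    [NormedAddCommGroup Uhat] [NormedSpace ℂ Uhat]
    [NormedAddCommGroup U] [NormedSpace ℂ U]
    (R : Uhat →L[ℂ] U) (A : U →L[ℂ] (U →L[ℂ] ℂ))
    (Ainv : (U →L[ℂ] ℂ) →L[ℂ] U) (Ahatinv : (Uhat →L[ℂ] ℂ) →L[ℂ] Uhat)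
    (f : U →L[ℂ] ℂ) : U →L[ℂ] ℂ :=
  (2 : ℂ) • trOp (exX R A Ahatinv) (A (((2 : ℂ)⁻¹ • Ainv) f))

/-!
With `T = I` and `M = A` the Robin transmission collapses: `(A + M)⁻¹ = ½ A⁻¹`, so the scattering
operator `S = -I + 2 A (2A)⁻¹` vanishes. For an exchange operator `X` with `X² = I`, the vector
`u + X u` is fixed by `X`, hence lies in `range R`, and `X^⊤ A X = A` gives
`R^⊤ A (X u) = R^⊤ A u`; applying `Â⁻¹` forces `u + X u = 2 R Â⁻¹ R^⊤ A u`. With this `X` the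
first iterate is `u⁽¹⁾ = ½ A⁻¹ (f + X^⊤ f)`, and `f + X^⊤ f = 2 A R û` because
`P = R Â⁻¹ R^⊤ A` is the `A`-orthogonal projection onto `range R` and `f` agrees with `A R û` there.
-/

@[simp]
lemma trOp_apply {V W : Type*} [NormedAddCommGroup V] [NormedSpace ℂ V]
    [NormedAddCommGroup W] [NormedSpace ℂ W] (B : V →L[ℂ] W) (μ : W →L[ℂ] ℂ) (v : V) :
    trOp B μ v = μ (B v) :=
  rfl

section

variable {Uhat U : Type*} [NormedAddCommGroup Uhat] [NormedSpace ℂ Uhat]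
  [NormedAddCommGroup U] [NormedSpace ℂ U]

lemma exX_apply (R : Uhat →L[ℂ] U) (A : U →L[ℂ] (U →L[ℂ] ℂ))
    (Ahatinv : (Uhat →L[ℂ] ℂ) →L[ℂ] Uhat) (u : U) :
    exX R A Ahatinv u = (2 : ℂ) • R (Ahatinv (trOp R (A u))) - u :=
  rfl

lemma apply_eq_self_of_range_eq_ker_sub {R : Uhat →L[ℂ] U} {X : U →L[ℂ] U}
    (hrange : LinearMap.range (R : Uhat →ₗ[ℂ] U) =
      LinearMap.ker ((ContinuousLinearMap.id ℂ U - X : U →L[ℂ] U) : U →ₗ[ℂ] U))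
    (v : Uhat) : X (R v) = R v := by
  have hker : R v ∈ LinearMap.ker ((ContinuousLinearMap.id ℂ U - X : U →L[ℂ] U) : U →ₗ[ℂ] U) :=
    hrange ▸ LinearMap.mem_range_self _ v
  exact (sub_eq_zero.mp (by simpa using hker)).symm

lemma add_apply_mem_range_of_involutive {R : Uhat →L[ℂ] U} {X : U →L[ℂ] U}
    (hX2 : X.comp X = ContinuousLinearMap.id ℂ U)
    (hrange : LinearMap.range (R : Uhat →ₗ[ℂ] U) =
      LinearMap.ker ((ContinuousLinearMap.id ℂ U - X : U →L[ℂ] U) : U →ₗ[ℂ] U))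
    (u : U) : u + X u ∈ LinearMap.range (R : Uhat →ₗ[ℂ] U) := by
  have hXX : X (X u) = u := by simpa using congrArg (· u) hX2
  rw [hrange, LinearMap.mem_ker]
  simp [hXX, add_comm]

/-- `X` fixes `range R`, so this is `X^⊤ A X = A` tested against `R v`. -/
lemma trOp_apply_comp_eq {R : Uhat →L[ℂ] U} {A : U →L[ℂ] (U →L[ℂ] ℂ)} {X : U →L[ℂ] U}
    (hrange : LinearMap.range (R : Uhat →ₗ[ℂ] U) =
      LinearMap.ker ((ContinuousLinearMap.id ℂ U - X : U →L[ℂ] U) : U →ₗ[ℂ] U))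
    (hXAX : (trOp X).comp (A.comp X) = A) (u : U) :
    trOp R (A (X u)) = trOp R (A u) := by
  ext v
  have h := congrArg (fun B : U →L[ℂ] (U →L[ℂ] ℂ) => B u (R v)) hXAX
  simpa [apply_eq_self_of_range_eq_ker_sub hrange v] using h

lemma eq_exX_of_involutive {R : Uhat →L[ℂ] U} {A : U →L[ℂ] (U →L[ℂ] ℂ)}
    {Ahatinv : (Uhat →L[ℂ] ℂ) →L[ℂ] Uhat}
    (hAhat_left : ∀ uhat : Uhat, Ahatinv (trOp R (A (R uhat))) = uhat) {X : U →L[ℂ] U}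
    (hX2 : X.comp X = ContinuousLinearMap.id ℂ U)
    (hrange : LinearMap.range (R : Uhat →ₗ[ℂ] U) =
      LinearMap.ker ((ContinuousLinearMap.id ℂ U - X : U →L[ℂ] U) : U →ₗ[ℂ] U))
    (hXAX : (trOp X).comp (A.comp X) = A) :
    X = exX R A Ahatinv := by
  ext u
  obtain ⟨w, hw⟩ := add_apply_mem_range_of_involutive hX2 hrange u
  have hw : R w = u + X u := hw
  have hAw : trOp R (A (R w)) = (2 : ℂ) • trOp R (A u) := by
    rw [hw, map_add, map_add, trOp_apply_comp_eq hrange hXAX, ← two_smul ℂ]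
  have hw' : w = (2 : ℂ) • Ahatinv (trOp R (A u)) := by
    rw [← hAhat_left w, hAw, map_smul]
  rw [exX_apply, ← map_smul, ← hw', hw, add_sub_cancel_left]

lemma exS_eq_zero {A : U →L[ℂ] (U →L[ℂ] ℂ)} {Ainv : (U →L[ℂ] ℂ) →L[ℂ] U}
    (hAr : ∀ μ : U →L[ℂ] ℂ, A (Ainv μ) = μ) : exS A Ainv = 0 := by
  ext μ v
  simp [exS, hAr]

lemma exd_eq_trOp_exX {R : Uhat →L[ℂ] U} {A : U →L[ℂ] (U →L[ℂ] ℂ)}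
    {Ainv : (U →L[ℂ] ℂ) →L[ℂ] U} (hAr : ∀ μ : U →L[ℂ] ℂ, A (Ainv μ) = μ)
    (Ahatinv : (Uhat →L[ℂ] ℂ) →L[ℂ] Uhat) (f : U →L[ℂ] ℂ) :
    exd R A Ainv Ahatinv f = trOp (exX R A Ahatinv) f := by
  simp [exd, hAr, smul_smul]

/-- `R Â⁻¹ R^⊤ A` is the `A`-orthogonal projection onto `range R`. -/
lemma apply_R_Ahatinv_trOp_eq {R : Uhat →L[ℂ] U} {A : U →L[ℂ] (U →L[ℂ] ℂ)}
    (hAsym : ∀ u v : U, A u v = A v u) {Ahatinv : (Uhat →L[ℂ] ℂ) →L[ℂ] Uhat}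
    (hAhat_right : ∀ g : Uhat →L[ℂ] ℂ, trOp R (A (R (Ahatinv g))) = g) (w : Uhat) (u : U) :
    A (R w) (R (Ahatinv (trOp R (A u)))) = A (R w) u := by
  have h := congrArg (· w) (hAhat_right (trOp R (A u)))
  simp only [trOp_apply] at h
  rw [hAsym, h, hAsym]

lemma trOp_exX_add_self {R : Uhat →L[ℂ] U} {A : U →L[ℂ] (U →L[ℂ] ℂ)}
    (hAsym : ∀ u v : U, A u v = A v u) {Ahatinv : (Uhat →L[ℂ] ℂ) →L[ℂ] Uhat}
    (hAhat_right : ∀ g : Uhat →L[ℂ] ℂ, trOp R (A (R (Ahatinv g))) = g)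
    {f : U →L[ℂ] ℂ} {uhat : Uhat} (huhat : trOp R (A (R uhat)) = trOp R f) :
    trOp (exX R A Ahatinv) f + f = (2 : ℂ) • A (R uhat) := by
  ext u
  have hf : f (R (Ahatinv (trOp R (A u)))) = A (R uhat) u := by
    rw [← apply_R_Ahatinv_trOp_eq hAsym hAhat_right uhat u]
    exact (congrArg (· (Ahatinv (trOp R (A u)))) huhat).symm
  simp [exX_apply, hf]

end

theorem statement19_general
    {Uhat U : Type*}
    [NormedAddCommGroup Uhat] [InnerProductSpace ℂ Uhat]
    [NormedAddCommGroup U] [InnerProductSpace ℂ U]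
    (R : Uhat →L[ℂ] U)
    (A : U →L[ℂ] (U →L[ℂ] ℂ))
    -- `A^⊤ = A`
    (hAsym : ∀ u v : U, A u v = A v u)
    -- `A` has a bounded inverse
    (Ainv : (U →L[ℂ] ℂ) →L[ℂ] U)
    (hAl : ∀ u : U, Ainv (A u) = u) (hAr : ∀ μ : U →L[ℂ] ℂ, A (Ainv μ) = μ)
    -- `Â = R^⊤ A R` bijective with bounded inverse
    (Ahatinv : (Uhat →L[ℂ] ℂ) →L[ℂ] Uhat)
    (hAhat_left : ∀ uhat : Uhat, Ahatinv (trOp R (A (R uhat))) = uhat)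
    (hAhat_right : ∀ g : Uhat →L[ℂ] ℂ, trOp R (A (R (Ahatinv g))) = g)
    (f : U →L[ℂ] ℂ) :
    -- uniqueness of the exchange operator
    (∀ X : U →L[ℂ] U,
      X.comp X = ContinuousLinearMap.id ℂ U →
      LinearMap.range (R : Uhat →ₗ[ℂ] U) = LinearMap.ker (((ContinuousLinearMap.id ℂ U - X : U →L[ℂ] U)) : U →ₗ[ℂ] U) →
      (trOp X).comp (A.comp X) = A →
      X = exX R A Ahatinv) ∧
    -- the undamped iteration converges after the first step
    (∀ uhat : Uhat, trOp R (A (R uhat)) = trOp R f →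
      ∀ lam0 : U →L[ℂ] ℂ,
        ((2 : ℂ)⁻¹ • Ainv)
          (f + (lam0 + (exd R A Ainv Ahatinv f -
            (lam0 - trOp (exX R A Ahatinv) (exS A Ainv lam0))))) = R uhat) := by
  refine ⟨fun X hX2 hrange hXAX => eq_exX_of_involutive hAhat_left hX2 hrange hXAX,
    fun uhat huhat lam0 => ?_⟩
  rw [exS_eq_zero hAr, zero_apply, map_zero, sub_zero, add_sub_cancel,
    exd_eq_trOp_exX hAr, add_comm, trOp_exX_add_self hAsym hAhat_right huhat]
  simp [hAl, smul_smul]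

/-- an exceptional interface exchange operator: with `Λ = U`, `T = I`,
`A` symmetric and invertible, `M = A`, `α = 1`, the only exchange operator satisfying A2
and `X^⊤ A X = A` is `X = 2 R Â⁻¹ R^⊤ A − I`, and the undamped Robin–Schwarz iteration
then yields `u⁽¹⁾ = R û` for every initial `λ⁽⁰⁾`. -/
theorem statement19
    {Uhat U : Type*}
    [NormedAddCommGroup Uhat] [InnerProductSpace ℂ Uhat] [CompleteSpace Uhat]
    [NormedAddCommGroup U] [InnerProductSpace ℂ U] [CompleteSpace U]
    (R : Uhat →L[ℂ] U)
    -- Assumption A1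
    (hRinj : LinearMap.ker (R : Uhat →ₗ[ℂ] U) = ⊥)
    (hRclosed : IsClosed (Set.range R))
    (A : U →L[ℂ] (U →L[ℂ] ℂ))
    -- `A^⊤ = A`
    (hAsym : ∀ u v : U, A u v = A v u)
    -- `A` has a bounded inverse
    (Ainv : (U →L[ℂ] ℂ) →L[ℂ] U)
    (hAl : ∀ u : U, Ainv (A u) = u) (hAr : ∀ μ : U →L[ℂ] ℂ, A (Ainv μ) = μ)
    -- `Â = R^⊤ A R` bijective with bounded inverse
    (Ahatinv : (Uhat →L[ℂ] ℂ) →L[ℂ] Uhat)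
    (hAhat_left : ∀ uhat : Uhat, Ahatinv (trOp R (A (R uhat))) = uhat)
    (hAhat_right : ∀ g : Uhat →L[ℂ] ℂ, trOp R (A (R (Ahatinv g))) = g)
    (f : U →L[ℂ] ℂ) :
    -- uniqueness of the exchange operator
    (∀ X : U →L[ℂ] U,
      X.comp X = ContinuousLinearMap.id ℂ U →
      LinearMap.range (R : Uhat →ₗ[ℂ] U) = LinearMap.ker (((ContinuousLinearMap.id ℂ U - X : U →L[ℂ] U)) : U →ₗ[ℂ] U) →
      (trOp X).comp (A.comp X) = A →
      X = exX R A Ahatinv) ∧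
    -- the undamped iteration converges after the first step
    (∀ uhat : Uhat, trOp R (A (R uhat)) = trOp R f →
      ∀ lam0 : U →L[ℂ] ℂ,
        ((2 : ℂ)⁻¹ • Ainv)
          (f + (lam0 + (exd R A Ainv Ahatinv f -
            (lam0 - trOp (exX R A Ahatinv) (exS A Ainv lam0))))) = R uhat) :=
  statement19_general R A hAsym Ainv hAl hAr Ahatinv hAhat_left hAhat_right f
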